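/- arXiv:2107.03355 — 3 statements merged into one kernel-verified Lean document; each statement's English description precedes it below -/
import Mathlib

section
/- Let G be a finitely generated group with word metric, let P and Q be subgroups of G, and let g ∈ G. Then P and gQg⁻¹ are commensurable subgroups (i.e., their intersection has finite index in both) if and only if the Hausdorff distance between the subsets P and gQ of G is finite. -/
open scoped Pointwise

variable {G : Type*} [Group G]

/-- Word distance between `g` and `h` with respect to a generating set `S` (values in `ℕ∞`). -/
noncomputable def wordDist (S : Set G) (g h : G) : ℕ∞ :=
  sInf {n : ℕ∞ | ∃ l : List G, (∀ x ∈ l, x ∈ S ∨ x⁻¹ ∈ S) ∧ l.prod = g⁻¹ * h ∧ (l.length : ℕ∞) = n}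

/-- Closed `r`-neighbourhood of a subset of `G` in the word metric. -/
def nbhd (S : Set G) (r : ℕ∞) (A : Set G) : Set G := {g | ∃ a ∈ A, wordDist S g a ≤ r}

/-- Hausdorff distance between subsets of `G` in the word metric. -/
noncomputable def hdist (S : Set G) (A B : Set G) : ℕ∞ :=
  sInf {r : ℕ∞ | A ⊆ nbhd S r B ∧ B ⊆ nbhd S r A}

/-- The conjugate subgroup `g P g⁻¹`. -/
def conjSub (g : G) (P : Subgroup G) : Subgroup G := ConjAct.toConjAct g • P

/-- The collection of all left cosets `gP`, `g ∈ G`, `P ∈ Ps`, as subsets of `G`. -/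
def cosetsOf (Ps : Set (Subgroup G)) : Set (Set G) :=
  {A | ∃ (g : G) (P : Subgroup G), P ∈ Ps ∧ A = g • (P : Set G)}

/-- A collection of subgroups is almost malnormal if any conjugate of a member meets any
member in a finite subgroup, except for the trivial configurations. -/
def AlmostMalnormal (Ps : Set (Subgroup G)) : Prop :=
  ∀ P ∈ Ps, ∀ P' ∈ Ps, ∀ g : G,
    ((conjSub g P ⊓ P' : Subgroup G) : Set G).Finite ∨ (P = P' ∧ g ∈ P)

/-- A collection of subgroups is reduced if commensurability of a member with a conjugate of a
member only happens trivially. -/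
def Reduced (Ps : Set (Subgroup G)) : Prop :=
  ∀ P ∈ Ps, ∀ Q ∈ Ps, ∀ g : G, Subgroup.Commensurable P (conjSub g Q) → P = Q ∧ g ∈ P

/-! The word metric is left invariant, so the closed `r`-neighbourhood of a set `A` is `A * B_r`,
where `B_r` is the ball of radius `r` about `1`. Since `S` is finite and generating, balls of
finite radius are finite and every finite set lies in one, so `hdist A B < ⊤` iff each of `A`, `B`
lies in finitely many right translates of the other. For `A = P` and `B = gQ = (gQg⁻¹)g` this says
that `P` is covered by finitely many right cosets of `gQg⁻¹` and (after translating by `g⁻¹`) that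
`Q` is covered by finitely many right cosets of `g⁻¹Pg`, i.e. that both relative indices are
finite. -/

theorem wordDist_mul_left (S : Set G) (c x y : G) :
    wordDist S (c * x) (c * y) = wordDist S x y := by
  simp [wordDist, mul_assoc]

theorem wordDist_ne_top {S : Set G} (hgen : Subgroup.closure S = ⊤) (x y : G) :
    wordDist S x y ≠ ⊤ := by
  have hmem : x⁻¹ * y ∈ Submonoid.closure (S ∪ S⁻¹) := by
    rw [← Subgroup.closure_toSubmonoid, hgen]
    exact Subgroup.mem_top _
  obtain ⟨l, hl, hprod⟩ := Submonoid.exists_list_of_mem_closure hmem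
  exact ne_top_of_le_ne_top (ENat.natCast_ne_top l.length)
    (sInf_le ⟨l, fun z hz => (hl z hz).imp id Set.mem_inv.mp, hprod, rfl⟩)

theorem ENat.sInf_mem_of_ne_top {s : Set ℕ∞} (h : sInf s ≠ ⊤) : sInf s ∈ s :=
  csInf_mem (Set.nonempty_iff_ne_empty.mpr fun hempty => h (hempty ▸ sInf_empty))

theorem exists_list_of_wordDist_ne_top {S : Set G} {x y : G} (h : wordDist S x y ≠ ⊤) :
    ∃ l : List G, (∀ z ∈ l, z ∈ S ∨ z⁻¹ ∈ S) ∧ l.prod = x⁻¹ * y ∧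
      (l.length : ℕ∞) = wordDist S x y :=
  ENat.sInf_mem_of_ne_top h

-- Written with `1` on the right so that `nbhd S r A = A * wordBall S r` needs only left
-- invariance.
def wordBall (S : Set G) (r : ℕ∞) : Set G := {z | wordDist S z 1 ≤ r}

theorem nbhd_eq_mul_wordBall (S : Set G) (r : ℕ∞) (A : Set G) :
    nbhd S r A = A * wordBall S r := by
  ext x
  constructor
  · rintro ⟨a, ha, hxa⟩
    refine ⟨a, ha, a⁻¹ * x, ?_, mul_inv_cancel_left a x⟩
    rwa [wordBall, Set.mem_ofPred_eq, ← wordDist_mul_left S a, mul_inv_cancel_left, mul_one]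
  · rintro ⟨a, ha, z, hz, rfl⟩
    refine ⟨a, ha, ?_⟩
    simpa only [mul_one] using (wordDist_mul_left S a z 1).trans_le hz

theorem wordBall_finite {S : Set G} (hS : S.Finite) {r : ℕ∞} (hr : r ≠ ⊤) :
    (wordBall S r).Finite := by
  lift r to ℕ using hr with n
  have : Finite ↥(S ∪ S⁻¹) := (hS.union hS.inv).to_subtype
  refine ((List.finite_length_le _ n).image
    fun l : List ↥(S ∪ S⁻¹) => (l.map Subtype.val).prod⁻¹).subset ?_
  intro z hz
  obtain ⟨l, hl, hprod, hlen⟩ :=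
    exists_list_of_wordDist_ne_top (ne_top_of_le_ne_top (ENat.natCast_ne_top n) hz)
  lift l to List ↥(S ∪ S⁻¹) using fun x hx => (hl x hx).imp id Set.mem_inv.mpr
  refine ⟨l, ?_, ?_⟩
  · have : ((l.map Subtype.val).length : ℕ∞) ≤ n := hlen ▸ hz
    simpa using this
  · simp only [hprod, mul_one, inv_inv]

theorem Set.Finite.exists_subset_wordBall {S : Set G} (hgen : Subgroup.closure S = ⊤)
    {F : Set G} (hF : F.Finite) : ∃ r ≠ ⊤, F ⊆ wordBall S r := by
  obtain ⟨n, hn⟩ := (hF.image fun f => (wordDist S f 1).toNat).bddAbove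
  refine ⟨n, ENat.natCast_ne_top n, fun f hf => ?_⟩
  rw [wordBall, Set.mem_ofPred_eq, ← ENat.natCast_toNat (wordDist_ne_top hgen f 1)]
  exact_mod_cast hn (Set.mem_image_of_mem _ hf)

theorem hdist_ne_top_iff {S : Set G} (hS : S.Finite) (hgen : Subgroup.closure S = ⊤)
    {A B : Set G} : hdist S A B ≠ ⊤ ↔
      (∃ F : Set G, F.Finite ∧ A ⊆ B * F) ∧ ∃ F : Set G, F.Finite ∧ B ⊆ A * F := by
  simp only [hdist, ← lt_top_iff_ne_top, sInf_lt_iff, Set.mem_ofPred_eq, nbhd_eq_mul_wordBall]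
  constructor
  · rintro ⟨r, ⟨hA, hB⟩, hr⟩
    exact ⟨⟨_, wordBall_finite hS hr.ne, hA⟩, _, wordBall_finite hS hr.ne, hB⟩
  · rintro ⟨⟨F₁, hF₁, hA⟩, F₂, hF₂, hB⟩
    obtain ⟨r, hr, hF⟩ := (hF₁.union hF₂).exists_subset_wordBall hgen
    exact ⟨r, ⟨hA.trans (Set.mul_subset_mul_left (Set.subset_union_left.trans hF)),
      hB.trans (Set.mul_subset_mul_left (Set.subset_union_right.trans hF))⟩, hr.lt_top⟩

theorem Subgroup.relIndex_ne_zero_iff_exists_finite_subset_mul {H K : Subgroup G} :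
    K.relIndex H ≠ 0 ↔ ∃ F : Set G, F.Finite ∧ (H : Set G) ⊆ K * F := by
  rw [relIndex, index_ne_zero_iff_finite]
  constructor
  · intro hfin
    -- `H ⧸ K.subgroupOf H` consists of left cosets; `h ↦ h⁻¹` turns them into right cosets.
    refine ⟨Set.range fun c : H ⧸ K.subgroupOf H => ((c.out : H) : G)⁻¹, Set.finite_range _,
      fun h hh => ?_⟩
    obtain ⟨k, hk⟩ := QuotientGroup.mk_out_eq_mul (K.subgroupOf H) (⟨h, hh⟩⁻¹ : H)
    refine ⟨k, mem_subgroupOf.mp k.2, _, ⟨QuotientGroup.mk (⟨h, hh⟩⁻¹ : H), rfl⟩, ?_⟩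
    simp [hk]
  · rintro ⟨F, hF, hHF⟩
    have : Finite F := hF.to_subtype
    have hcover (h : H) : ∃ f : F, (h : G)⁻¹ * (f : G)⁻¹ ∈ K := by
      obtain ⟨k, hk, f, hf, hkf⟩ := hHF (H.inv_mem h.2)
      exact ⟨⟨f, hf⟩, by rw [← hkf, mul_inv_cancel_right]; exact hk⟩
    choose φ hφ using hcover
    refine Finite.of_injective (fun c : H ⧸ K.subgroupOf H => φ c.out) fun c c' hcc' => ?_
    rw [← QuotientGroup.out_eq' c, ← QuotientGroup.out_eq' c', QuotientGroup.eq, mem_subgroupOf]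
    have hK := K.mul_mem (hφ c.out) (K.inv_mem (hφ c'.out))
    simpa [hcc', mul_assoc] using hK

theorem mem_conjSub {g x : G} {K : Subgroup G} : x ∈ conjSub g K ↔ g⁻¹ * x * g ∈ K := by
  rw [conjSub, Subgroup.mem_pointwise_smul_iff_inv_smul_mem]
  simp [ConjAct.smul_def, mul_assoc]

theorem smul_subgroup_mul_eq_conjSub_mul (g : G) (K : Subgroup G) (F : Set G) :
    g • (K : Set G) * F = (conjSub g K : Set G) * (g • F) := by
  ext x
  simp only [Set.mem_mul, Set.mem_smul_set, SetLike.mem_coe, mem_conjSub, smul_eq_mul]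
  constructor
  · rintro ⟨_, ⟨k, hk, rfl⟩, f, hf, rfl⟩
    exact ⟨g * k * g⁻¹, by simpa [mul_assoc] using hk, _, ⟨f, hf, rfl⟩, by group⟩
  · rintro ⟨y, hy, _, ⟨f, hf, rfl⟩, rfl⟩
    exact ⟨_, ⟨_, hy, rfl⟩, f, hf, by group⟩

theorem relIndex_conjSub_ne_zero_iff {H K : Subgroup G} {g : G} :
    (conjSub g K).relIndex H ≠ 0 ↔ ∃ F : Set G, F.Finite ∧ (H : Set G) ⊆ g • (K : Set G) * F := by
  rw [Subgroup.relIndex_ne_zero_iff_exists_finite_subset_mul]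
  constructor
  · rintro ⟨F, hF, hHF⟩
    refine ⟨g⁻¹ • F, hF.smul_set, ?_⟩
    rwa [smul_subgroup_mul_eq_conjSub_mul, smul_inv_smul]
  · rintro ⟨F, hF, hHF⟩
    exact ⟨g • F, hF.smul_set, smul_subgroup_mul_eq_conjSub_mul g K F ▸ hHF⟩

theorem relIndex_conjSub_inv (g : G) (P Q : Subgroup G) :
    (conjSub g⁻¹ P).relIndex Q = P.relIndex (conjSub g Q) := by
  rw [← Subgroup.relIndex_pointwise_smul (ConjAct.toConjAct g), conjSub, map_inv, smul_inv_smul]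
  rfl

/-- In a finitely generated group, `P` and `gQg⁻¹` are commensurable iff the
Hausdorff distance between `P` and the left coset `gQ` is finite. -/
theorem commensurable_iff_hdist_ne_top (S : Set G) (hS : S.Finite)
    (hgen : Subgroup.closure S = ⊤) (P Q : Subgroup G) (g : G) :
    Subgroup.Commensurable P (conjSub g Q) ↔ hdist S (P : Set G) (g • (Q : Set G)) ≠ ⊤ := by
  rw [hdist_ne_top_iff hS hgen, Subgroup.Commensurable, and_comm]
  refine and_congr relIndex_conjSub_ne_zero_iff ?_
  rw [← relIndex_conjSub_inv, relIndex_conjSub_ne_zero_iff]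
  simp_rw [Set.smul_set_subset_iff_subset_inv_smul_set, smul_mul_assoc]
end

section
/- Let P be a collection of subgroups of a group G such that every P ∈ P has finite index in its commensurator Comm_G(P). Let P* be a refinement of P, i.e., a set of representatives of conjugacy classes of the collection {Comm_G(gPg⁻¹) : P ∈ P, g ∈ G}. Then P* is a reduced collection. -/
open scoped Pointwise

variable {G : Type*} [Group G]

/-- `Pstar` is a refinement of `Ps`: a set of representatives of conjugacy classes of the
collection of commensurators of conjugates of members of `Ps`. -/
def IsRefinement (Ps Pstar : Set (Subgroup G)) : Prop :=
  (∀ Q ∈ Pstar, ∃ P ∈ Ps, ∃ g : G, Q = Subgroup.Commensurable.commensurator (conjSub g P)) ∧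
  (∀ P ∈ Ps, ∀ g : G, ∃ Q ∈ Pstar, ∃ h : G,
      conjSub h Q = Subgroup.Commensurable.commensurator (conjSub g P)) ∧
  (∀ Q ∈ Pstar, ∀ Q' ∈ Pstar, (∃ h : G, conjSub h Q = Q') → Q = Q')

/-!
Every member `Q` of a refinement is its own commensurator, since commensurators commute with
conjugation and `Comm (Comm P) = Comm P` when `P` has finite index in `Comm P`. If `Q` is
commensurable with `g Q' g⁻¹`, taking commensurators gives `Q = g Q' g⁻¹`; hence `Q = Q'` as
conjugacy representatives, and then `g` normalizes `Q`, so `g ∈ Comm Q = Q`.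
-/

open Subgroup Subgroup.Commensurable

theorem Subgroup.Commensurable.normalizer_le_commensurator (P : Subgroup G) :
    normalizer (P : Set G) ≤ commensurator P :=
  fun g hg => by rw [commensurator_mem_iff, conjAct_pointwise_smul_eq_self hg]

theorem Subgroup.Commensurable.commensurator_smul (g : ConjAct G) (P : Subgroup G) :
    commensurator (g • P) = g • commensurator P := by
  ext x
  rw [mem_pointwise_smul_iff_inv_smul_mem, commensurator_mem_iff, commensurator_mem_iff,
    commensurable_conj g⁻¹, inv_smul_smul, smul_smul, smul_smul]
  have : ConjAct.toConjAct (g⁻¹ • x) = g⁻¹ * ConjAct.toConjAct x * g := by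
    simp [ConjAct.smul_def]
  rw [this]

theorem Subgroup.Commensurable.commensurator_commensurator {P : Subgroup G}
    (hP : P.relIndex (commensurator P) ≠ 0) :
    commensurator (commensurator P) = commensurator P := by
  have hle : P ≤ commensurator P := le_normalizer.trans (normalizer_le_commensurator P)
  refine (Commensurable.eq ⟨hP, ?_⟩).symm
  simp [relIndex_eq_one.mpr hle]

theorem IsRefinement.commensurator_eq {Ps Pstar : Set (Subgroup G)}
    (hfi : ∀ P ∈ Ps, P.relIndex (commensurator P) ≠ 0) (href : IsRefinement Ps Pstar)
    {Q : Subgroup G} (hQ : Q ∈ Pstar) : commensurator Q = Q := by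
  obtain ⟨P, hP, g, rfl⟩ := href.1 Q hQ
  simp only [conjSub, commensurator_smul, commensurator_commensurator (hfi P hP)]

theorem reduced_of_commensurator_eq {Qs : Set (Subgroup G)}
    (hself : ∀ Q ∈ Qs, commensurator Q = Q)
    (hnonconj : ∀ Q ∈ Qs, ∀ Q' ∈ Qs, (∃ h : G, conjSub h Q = Q') → Q = Q') :
    Reduced Qs := by
  intro Q hQ Q' hQ' g hcomm
  have hconj : conjSub g Q' = Q := by
    rw [← hself Q hQ, Commensurable.eq hcomm, conjSub, commensurator_smul, hself Q' hQ']
  obtain rfl : Q' = Q := hnonconj Q' hQ' Q hQ ⟨g, hconj⟩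
  refine ⟨rfl, ?_⟩
  rw [← hself Q' hQ']
  exact normalizer_le_commensurator Q' (conjAct_pointwise_smul_iff.mp hconj)

/-- If each member of `Ps` has finite index in its commensurator, then any
refinement of `Ps` is a reduced collection. -/
theorem refinement_reduced (Ps Pstar : Set (Subgroup G))
    (hfi : ∀ P ∈ Ps, P.relIndex (Subgroup.Commensurable.commensurator P) ≠ 0)
    (href : IsRefinement Ps Pstar) :
    Reduced Pstar :=
  reduced_of_commensurator_eq (fun _ hQ => href.commensurator_eq hfi hQ) href.2.2
end

section
/- Let Γ be a simplicial graph. Γ is fine (for every edge e and every n, only finitely many circuits of length ≤ n contain e) if and only if for every vertex v, the space T_vΓ of neighbors of v equipped with the angle metric ∠_v is a locally finite metric space, where ∠_v(x,y) is the length of a shortest path from x to y in Γ ∖ {v} (∞ if none exists). -/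
/-!
If `y ≠ x` is a neighbour of `v` at angle at most `r` from `x`, a path of length at most `r`
from `x` to `y` avoiding `v`, closed up by the edges `yv` and `vx`, is a circuit of length at
most `r + 2` through `vx` whose penultimate vertex is `y`; so fineness bounds the angle balls.

Conversely, along a circuit `c₀ c₁ … c_L` the rest of the circuit avoids `c_{i+1}`, so `c_{i+2}`
is a neighbour of `c_{i+1}` at angle at most `L - 2` from `c_i`. Starting from the two ends of an
edge and adding, `n` times, the angle-`n` balls around the vertices found so far therefore gives
a finite set containing every vertex of every circuit of length at most `n` through that edge,
and a circuit is determined by its list of vertices.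
-/

/-- A simplicial graph is fine if every edge is contained in only finitely many circuits
(embedded cycles) of each bounded length. -/
def SimpleGraph.Fine {V : Type*} (Γ : SimpleGraph V) : Prop :=
  ∀ e ∈ Γ.edgeSet, ∀ n : ℕ,
    {c : (v : V) × Γ.Walk v v | c.2.IsCycle ∧ e ∈ c.2.edges ∧ c.2.length ≤ n}.Finite

namespace SimpleGraph

variable {V : Type*} {Γ : SimpleGraph V}

lemma edist_induce_le_iff {s : Set V} {x y : s} {r : ℕ} :
    (Γ.induce s).edist x y ≤ r ↔ ∃ p : Γ.Walk x y, (∀ z ∈ p.support, z ∈ s) ∧ p.length ≤ r := by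
  constructor
  · intro h
    obtain ⟨q, hq⟩ := (reachable_of_edist_ne_top (ne_top_of_le_ne_top (by simp) h)
      ).exists_walk_length_eq_edist
    refine ⟨q.map (Embedding.induce s).toHom, fun z hz => ?_, ?_⟩
    · have hz' : z ∈ q.support.map (Embedding.induce s).toHom := Walk.support_map _ q ▸ hz
      obtain ⟨z, -, rfl⟩ := List.mem_map.1 hz'
      exact z.2
    · have := q.length_map (Embedding.induce s).toHom
      exact_mod_cast this ▸ hq ▸ h
  · rintro ⟨p, hp, hlen⟩
    calc (Γ.induce s).edist x y ≤ (p.induce s hp).length := edist_le _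
      _ ≤ r := by
        rw [← Walk.length_map (Embedding.induce s).toHom, Walk.map_induce]
        exact_mod_cast hlen

variable (Γ) in
/-- The ball of radius `r` about `x` in `(T_vΓ, ∠_v)`: walks avoiding `v` are the walks of
`Γ ∖ {v}`. -/
def angleBall (v x : V) (r : ℕ) : Set V :=
  {y | Γ.Adj v y ∧ ∃ p : Γ.Walk x y, v ∉ p.support ∧ p.length ≤ r}

lemma angleBall_mono {v x : V} {r r' : ℕ} (h : r ≤ r') : Γ.angleBall v x r ⊆ Γ.angleBall v x r' :=
  fun _ ⟨hvy, p, hvp, hp⟩ => ⟨hvy, p, hvp, hp.trans h⟩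

lemma image_val_setOf_adj_edist_induce_le (v : V) (x : {w : V // w ≠ v}) (r : ℕ) :
    Subtype.val '' {y : {w : V // w ≠ v} | Γ.Adj v y ∧
      (Γ.induce {w : V | w ≠ v}).edist x y ≤ (r : ℕ∞)} = Γ.angleBall v x r := by
  ext y
  constructor
  · rintro ⟨y, ⟨hvy, hxy⟩, rfl⟩
    obtain ⟨p, hp, hlen⟩ := edist_induce_le_iff.1 hxy
    exact ⟨hvy, p, fun h => hp v h rfl, hlen⟩
  · rintro ⟨hvy, p, hvp, hlen⟩
    refine ⟨⟨y, hvy.ne'⟩, ⟨hvy, edist_induce_le_iff.2 ⟨p, fun z hz hzv => ?_, hlen⟩⟩, rfl⟩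
    exact hvp (hzv ▸ hz)

lemma angleBall_subset_insert_image_penultimate {v x : V} (hvx : Γ.Adj v x) (r : ℕ) :
    Γ.angleBall v x r ⊆ insert x ((fun c : (u : V) × Γ.Walk u u => c.2.penultimate) ''
      {c | c.2.IsCycle ∧ s(v, x) ∈ c.2.edges ∧ c.2.length ≤ r + 2}) := by
  classical
  rintro y ⟨hvy, p, hvp, hlen⟩
  rcases eq_or_ne y x with rfl | hyx
  · exact Set.mem_insert _ _
  have hvq : v ∉ p.bypass.support := fun h => hvp (p.support_bypass_subset_support h)
  refine Or.inr ⟨⟨v, .cons hvx (p.bypass.concat hvy.symm)⟩, ⟨?_, by simp, ?_⟩, ?_⟩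
  · refine (Walk.cons_isCycle_iff _ _).2 ⟨p.bypass_isPath.concat hvq _, fun h => ?_⟩
    rw [Walk.edges_concat, List.concat_eq_append, List.mem_append] at h
    rcases h with h | h
    · exact hvq (p.bypass.fst_mem_support_of_mem_edges h)
    · rcases Sym2.eq_iff.1 (List.mem_singleton.1 h) with ⟨h, -⟩ | ⟨-, h⟩
      exacts [hvy.ne h, hyx h.symm]
  · simp only [Walk.length_cons, Walk.length_concat]
    have := p.length_bypass_le_length
    omega
  · have : ¬(p.bypass.concat hvy.symm).Nil := by
      rw [Walk.not_nil_iff_lt_length, Walk.length_concat]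
      omega
    exact (Walk.penultimate_cons_of_not_nil _ _ this).trans (Walk.penultimate_concat _ _)

lemma angleBall_finite_of_fine (hΓ : Γ.Fine) {v x : V} (hvx : Γ.Adj v x) (r : ℕ) :
    (Γ.angleBall v x r).Finite :=
  (((hΓ _ hvx (r + 2)).image _).insert x).subset (angleBall_subset_insert_image_penultimate hvx r)

variable (Γ) in
def angleStep (n : ℕ) (S : Set V) : Set V :=
  S ∪ ⋃ x ∈ S, ⋃ y ∈ S, ⋃ (_ : Γ.Adj y x), Γ.angleBall y x n

lemma subset_angleStep (n : ℕ) (S : Set V) : S ⊆ Γ.angleStep n S :=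
  Set.subset_union_left

lemma angleBall_subset_angleStep {n : ℕ} {S : Set V} {x y : V} (hx : x ∈ S) (hy : y ∈ S)
    (hyx : Γ.Adj y x) : Γ.angleBall y x n ⊆ Γ.angleStep n S := fun _ hz =>
  Or.inr (Set.mem_biUnion hx (Set.mem_biUnion hy (Set.mem_iUnion_of_mem hyx hz)))

lemma iterate_angleStep_mono (n : ℕ) : Monotone fun k => (Γ.angleStep n)^[k] :=
  Function.monotone_iterate_of_id_le (subset_angleStep n)

lemma iterate_angleStep_finite (H : ∀ v x, Γ.Adj v x → ∀ r, (Γ.angleBall v x r).Finite)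
    (n k : ℕ) {S : Set V} (hS : S.Finite) : ((Γ.angleStep n)^[k] S).Finite := by
  induction k with
  | zero => exact hS
  | succ k ih =>
    rw [Function.iterate_succ_apply']
    exact ih.union (ih.biUnion fun x _ => ih.biUnion fun y _ =>
      Set.finite_iUnion fun hyx => H y x hyx n)

lemma apply_mem_iterate_angleStep {n m : ℕ} {S : Set V} {f : ℕ → V} (h0 : f 0 ∈ S) (h1 : f 1 ∈ S)
    (hf : ∀ i, i + 1 < m →
      Γ.Adj (f (i + 1)) (f i) ∧ f (i + 2) ∈ Γ.angleBall (f (i + 1)) (f i) n) :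
    ∀ i < m, f i ∈ (Γ.angleStep n)^[i] S ∧ f (i + 1) ∈ (Γ.angleStep n)^[i] S
  | 0, _ => ⟨h0, h1⟩
  | i + 1, hi => by
    obtain ⟨hfi, hfi₁⟩ := apply_mem_iterate_angleStep h0 h1 hf i (by omega)
    obtain ⟨hadj, hball⟩ := hf i hi
    rw [Function.iterate_succ_apply']
    exact ⟨subset_angleStep n _ hfi₁, angleBall_subset_angleStep hfi hfi₁ hadj hball⟩

namespace Walk

variable {u : V} {c : Γ.Walk u u}

lemma IsCycle.getVert_ne_getVert (hc : c.IsCycle) {i k : ℕ} (hi₀ : 0 < i) (hi : i < c.length)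
    (hk : k ≤ c.length) (hki : k ≠ i) : c.getVert k ≠ c.getVert i := by
  intro h
  rcases Nat.eq_zero_or_pos k with rfl | hk₀
  · rw [getVert_zero] at h
    exact hi.ne' (hc.getVert_injOn ⟨by omega, le_rfl⟩ ⟨hi₀, hi.le⟩ (c.getVert_length.trans h))
  · exact hki (hc.getVert_injOn ⟨hk₀, hk⟩ ⟨hi₀, hi.le⟩ h)

lemma IsCycle.getVert_mem_angleBall (hc : c.IsCycle) {i : ℕ} (hi : i + 1 < c.length) :
    c.getVert (i + 2) ∈ Γ.angleBall (c.getVert (i + 1)) (c.getVert i) (c.length - 2) := by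
  refine ⟨c.adj_getVert_succ hi, (c.take i).reverse.append (c.drop (i + 2)).reverse, ?_, ?_⟩
  · intro h
    rw [mem_support_append_iff, support_reverse, support_reverse, List.mem_reverse,
      List.mem_reverse, mem_support_iff_exists_getVert, mem_support_iff_exists_getVert] at h
    rcases h with ⟨j, hj, hjlen⟩ | ⟨j, hj, hjlen⟩
    · rw [take_getVert] at hj
      exact hc.getVert_ne_getVert (by omega) hi (by omega) (by omega) hj
    · rw [drop_getVert] at hj
      rw [drop_length] at hjlen
      exact hc.getVert_ne_getVert (by omega) hi (by omega) (by omega) hj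
  · simp only [length_append, length_reverse, take_length, drop_length]
    omega

lemma IsCycle.getVert_mem_iterate_angleStep (hc : c.IsCycle) {n : ℕ} (hn : c.length ≤ n)
    {S : Set V} {j : ℕ} (hj : j < c.length) (h₀ : c.getVert j ∈ S) (h₁ : c.getVert (j + 1) ∈ S)
    {i : ℕ} (hji : j ≤ i) (hi : i ≤ c.length) : c.getVert i ∈ (Γ.angleStep n)^[n] S := by
  have hmarch := apply_mem_iterate_angleStep (f := fun k => c.getVert (j + k)) (m := c.length - j)
    h₀ h₁ fun k hk => ⟨(c.adj_getVert_succ (i := j + k) (by omega)).symm,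
      angleBall_mono (r := c.length - 2) (r' := n) (by omega)
        (hc.getVert_mem_angleBall (i := j + k) (by omega))⟩
  rcases hi.lt_or_eq with hi | rfl
  · have := (hmarch (i - j) (by omega)).1
    simp only [Nat.add_sub_cancel' hji] at this
    exact iterate_angleStep_mono n (by omega : i - j ≤ n) S this
  · have := (hmarch (c.length - j - 1) (by omega)).2
    simp only [show j + (c.length - j - 1 + 1) = c.length by omega] at this
    exact iterate_angleStep_mono n (by omega : c.length - j - 1 ≤ n) S this

lemma IsCycle.support_subset_iterate_angleStep (hc : c.IsCycle) {n : ℕ} (hn : c.length ≤ n)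
    {a b : V} (hab : s(a, b) ∈ c.edges) : ∀ z ∈ c.support, z ∈ (Γ.angleStep n)^[n] {a, b} := by
  obtain ⟨j, hj, hjab⟩ := (mk_mem_edges_iff_exists c).1 hab
  have hmem {z : V} (hz : z ∈ s(c.getVert j, c.getVert (j + 1))) : z ∈ ({a, b} : Set V) :=
    Sym2.mem_iff.1 (hjab ▸ hz)
  intro z hz
  obtain ⟨i, rfl, hi⟩ := mem_support_iff_exists_getVert.1 hz
  rcases le_total j i with hji | hij
  · exact hc.getVert_mem_iterate_angleStep hn hj (hmem (Sym2.mem_mk_left _ _))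
      (hmem (Sym2.mem_mk_right _ _)) hji hi
  · have hrev (k : ℕ) (hk : k ≤ c.length) : c.reverse.getVert (c.length - k) = c.getVert k := by
      rw [getVert_reverse, Nat.sub_sub_self hk]
    rw [← hrev i hi]
    refine hc.reverse.getVert_mem_iterate_angleStep (j := c.length - (j + 1))
      (by rwa [length_reverse]) (by rw [length_reverse]; omega) ?_ ?_ (by omega)
      (by rw [length_reverse]; omega)
    · rw [hrev (j + 1) hj]; exact hmem (Sym2.mem_mk_right _ _)
    · rw [show c.length - (j + 1) + 1 = c.length - j by omega, hrev j hj.le]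
      exact hmem (Sym2.mem_mk_left _ _)

end Walk

lemma finite_setOf_closedWalk_support_subset {T : Set V} (hT : T.Finite) (n : ℕ) :
    {c : (u : V) × Γ.Walk u u | c.2.length ≤ n ∧ ∀ z ∈ c.2.support, z ∈ T}.Finite := by
  have : Finite T := hT
  have hlists : {l : List V | l.length ≤ n + 1 ∧ ∀ z ∈ l, z ∈ T}.Finite := by
    refine ((List.finite_length_le T (n + 1)).image (List.map (↑))).subset ?_
    rintro l ⟨hl, hlT⟩
    lift l to List T using hlT
    exact ⟨l, by simpa using hl, rfl⟩
  refine Set.Finite.of_finite_image (f := fun c => c.2.support) (hlists.subset ?_) ?_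
  · rintro _ ⟨c, ⟨hc, hcT⟩, rfl⟩
    exact ⟨by simpa using hc, hcT⟩
  · rintro ⟨u, c⟩ - ⟨u', c'⟩ - (h : c.support = c'.support)
    have hhead := congrArg List.head? h
    rw [← c.cons_tail_support, ← c'.cons_tail_support] at hhead
    simp only [List.head?_cons, Option.some.injEq] at hhead
    subst hhead
    exact congrArg (Sigma.mk u) (Walk.support_injective h)

lemma fine_of_angleBall_finite (H : ∀ v x, Γ.Adj v x → ∀ r, (Γ.angleBall v x r).Finite) :
    Γ.Fine := by
  intro e _ n
  induction e using Sym2.ind with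
  | _ a b =>
    refine (finite_setOf_closedWalk_support_subset
      (iterate_angleStep_finite H n n (Set.toFinite {a, b})) n).subset ?_
    rintro ⟨u, c⟩ ⟨hc, hab, hn⟩
    exact ⟨hn, hc.support_subset_iterate_angleStep hn hab⟩

end SimpleGraph

/-- A graph is fine iff at every vertex `v` the set of neighbours of `v`,
with the angle metric (distance measured in the graph with `v` deleted), is locally finite. -/
theorem fine_iff_angle_metric_locallyFinite {V : Type*} (Γ : SimpleGraph V) :
    Γ.Fine ↔
      ∀ (v : V) (x : {w : V // w ≠ v}), Γ.Adj v x → ∀ r : ℕ,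
        {y : {w : V // w ≠ v} | Γ.Adj v y ∧
          (Γ.induce {w : V | w ≠ v}).edist x y ≤ (r : ℕ∞)}.Finite := by
  simp_rw [← Set.finite_image_iff Subtype.val_injective.injOn,
    SimpleGraph.image_val_setOf_adj_edist_induce_le]
  exact ⟨fun hΓ v x hvx r => SimpleGraph.angleBall_finite_of_fine hΓ hvx r,
    fun H => SimpleGraph.fine_of_angleBall_finite fun v x hvx => H v ⟨x, hvx.ne'⟩ hvx⟩
end
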